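/- In a finite Kripke structure K, for propositional formulas l, l₁, …, l_m, there exists an infinite path π from the initial state satisfying FG l ∧ ⋀_{j=1}^{m} GF l_j if and only if there exists a reachable nontrivial strongly connected set B of states such that every state s ∈ B satisfies l, and for each j ∈ {1,…,m} there exists a state s ∈ B with s ⊨ l_j. -/

import Mathlib

/-- Syntax of LTL formulas (with general negation, next, until, weak until). -/
inductive LTL (AP : Type) : Type where
  | tru : LTL AP
  | atom : AP → LTL AP
  | neg : LTL AP → LTL AP
  | conj : LTL AP → LTL AP → LTL AP
  | disj : LTL AP → LTL AP → LTL AP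
  | next : LTL AP → LTL AP
  | untl : LTL AP → LTL AP → LTL AP
  | wuntl : LTL AP → LTL AP → LTL AP

/-- Infinite words over the alphabet `2^AP`. -/
def Word (AP : Type) := ℕ → Set AP

/-- The suffix `ρ[i..]` of an infinite word. -/
def Word.suffix {AP : Type} (ρ : Word AP) (i : ℕ) : Word AP := fun n => ρ (n + i)

/-- Satisfaction of an LTL formula on an infinite word. -/
def sat {AP : Type} : Word AP → LTL AP → Prop
  | _, .tru => True
  | ρ, .atom a => a ∈ ρ 0
  | ρ, .neg φ => ¬ sat ρ φ
  | ρ, .conj φ ψ => sat ρ φ ∧ sat ρ ψ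
  | ρ, .disj φ ψ => sat ρ φ ∨ sat ρ ψ
  | ρ, .next φ => sat (ρ.suffix 1) φ
  | ρ, .untl φ ψ => ∃ i, sat (ρ.suffix i) ψ ∧ ∀ j < i, sat (ρ.suffix j) φ
  | ρ, .wuntl φ ψ =>
      (∀ i, sat (ρ.suffix i) φ) ∨ ∃ i, sat (ρ.suffix i) ψ ∧ ∀ j < i, sat (ρ.suffix j) φ

/-- Eventually: `F φ = ⊤ U φ`. -/
def LTL.ev {AP : Type} (φ : LTL AP) : LTL AP := LTL.untl LTL.tru φ

/-- Always: `G φ = φ W ⊥`. -/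
def LTL.alw {AP : Type} (φ : LTL AP) : LTL AP := LTL.wuntl φ (LTL.neg LTL.tru)

/-- Semantic equivalence of formulas on all infinite words. -/
def LTLequiv {AP : Type} (φ ψ : LTL AP) : Prop := ∀ ρ : Word AP, sat ρ φ ↔ sat ρ ψ

/-- Prepend a finite word `l` to an infinite word `ρ`. -/
def prepend {AP : Type} (l : List (Set AP)) (ρ : Word AP) : Word AP :=
  fun i => if h : i < l.length then l.get ⟨i, h⟩ else ρ (i - l.length)

/-- A fairness formula: satisfaction is closed under suffixes and under prepending
arbitrary finite prefixes. -/
def Fairness {AP : Type} (φ : LTL AP) : Prop :=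
  (∀ ρ : Word AP, sat ρ φ → ∀ i, sat (ρ.suffix i) φ) ∧
  (∀ ρ : Word AP, sat ρ φ → ∀ ρ₁ : List (Set AP), sat (prepend ρ₁ ρ) φ)

/-- The cyclic (periodic) word `σ^ω` obtained by repeating a nonempty finite word `σ`. -/
def cyc {AP : Type} (σ : List (Set AP)) (h : σ ≠ []) : Word AP :=
  fun i => σ.get ⟨i % σ.length, Nat.mod_lt i (List.length_pos_iff.mpr h)⟩

/-- Propositional formulas: atoms and negated atoms combined with `∧`, `∨`. -/
inductive PropForm (AP : Type) : Type where
  | atom : AP → PropForm AP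
  | natom : AP → PropForm AP
  | conj : PropForm AP → PropForm AP → PropForm AP
  | disj : PropForm AP → PropForm AP → PropForm AP

/-- Satisfaction of a propositional formula at a single letter `A ∈ 2^AP`. -/
def psat {AP : Type} (A : Set AP) : PropForm AP → Prop
  | .atom a => a ∈ A
  | .natom a => a ∉ A
  | .conj l₁ l₂ => psat A l₁ ∧ psat A l₂
  | .disj l₁ l₂ => psat A l₁ ∨ psat A l₂

/-- Embedding of propositional formulas into LTL. -/
def PropForm.toLTL {AP : Type} : PropForm AP → LTL AP
  | .atom a => .atom a
  | .natom a => .neg (.atom a)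
  | .conj l₁ l₂ => .conj l₁.toLTL l₂.toLTL
  | .disj l₁ l₂ => .disj l₁.toLTL l₂.toLTL

/-- A finite Kripke structure with a total transition relation. -/
structure Kripke (AP : Type) where
  S : Type
  [fin : Fintype S]
  init : S
  T : S → S → Prop
  total : ∀ s, ∃ t, T s t
  L : S → Set AP

/-- `π` is an infinite path of `K` starting at the initial state. -/
def Kripke.IsPath {AP : Type} (K : Kripke AP) (π : ℕ → K.S) : Prop :=
  π 0 = K.init ∧ ∀ i, K.T (π i) (π (i + 1))

/-- There is a nonempty finite path from `s` to `t` staying inside `B`. -/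
def Kripke.ConnIn {AP : Type} (K : Kripke AP) (B : Set K.S) (s t : K.S) : Prop :=
  ∃ n > 0, ∃ f : ℕ → K.S, f 0 = s ∧ f n = t ∧
    (∀ i < n, K.T (f i) (f (i + 1))) ∧ (∀ i ≤ n, f i ∈ B)

/-- `B` is a nontrivial strongly connected set of states. -/
def Kripke.IsSCSet {AP : Type} (K : Kripke AP) (B : Set K.S) : Prop :=
  ∀ s ∈ B, ∀ t ∈ B, K.ConnIn B s t

/-- Some state of `B` is reachable from the initial state. -/
def Kripke.Reachable {AP : Type} (K : Kripke AP) (B : Set K.S) : Prop :=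
  ∃ s ∈ B, ∃ n, ∃ f : ℕ → K.S, f 0 = K.init ∧ f n = s ∧ ∀ i < n, K.T (f i) (f (i + 1))

/-- The periodic word `({a}{}{a,c})^ω`. -/
def word1 {AP : Type} (a c : AP) : Word AP :=
  fun i => if i % 3 = 0 then {a} else if i % 3 = 1 then ∅ else {a, c}

/-- The periodic word `({a}{a,c}{})^ω`. -/
def word2 {AP : Type} (a c : AP) : Word AP :=
  fun i => if i % 3 = 0 then {a} else if i % 3 = 1 then {a, c} else ∅

/-!
A path satisfying `FG l ∧ ⋀ⱼ GF lⱼ` visits only finitely many states, so from some time on it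
stays inside the set `B` of states it visits infinitely often. Any two states of `B` recur one
after the other beyond that time, so `B` is strongly connected; it satisfies `l` everywhere and
meets every `lⱼ`. Conversely, given such a `B`, take a lasso: a prefix to some `s ∈ B`, followed
forever by a closed walk from `s` inside `B` through a witness of each `lⱼ`.
-/

open Filter

section Semantics

variable {AP : Type}

lemma sat_toLTL (p : PropForm AP) (ρ : Word AP) : sat ρ p.toLTL ↔ psat (ρ 0) p := by
  induction p with
  | atom a | natom a => exact Iff.rfl
  | conj p q hp hq => exact and_congr hp hq
  | disj p q hp hq => exact or_congr hp hq

lemma sat_toLTL_suffix (p : PropForm AP) (ρ : Word AP) (i : ℕ) :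
    sat (ρ.suffix i) p.toLTL ↔ psat (ρ i) p := by
  rw [sat_toLTL, Word.suffix, Nat.zero_add]

lemma Word.suffix_suffix (ρ : Word AP) (i j : ℕ) : (ρ.suffix i).suffix j = ρ.suffix (j + i) :=
  funext fun n => congrArg ρ (Nat.add_assoc n j i)

lemma sat_alw (φ : LTL AP) (ρ : Word AP) : sat ρ φ.alw ↔ ∀ i, sat (ρ.suffix i) φ :=
  ⟨fun h => h.resolve_right fun ⟨_, hi, _⟩ => hi trivial, Or.inl⟩

lemma sat_ev (φ : LTL AP) (ρ : Word AP) : sat ρ φ.ev ↔ ∃ i, sat (ρ.suffix i) φ :=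
  ⟨fun ⟨i, hi, _⟩ => ⟨i, hi⟩, fun ⟨i, hi⟩ => ⟨i, hi, fun _ _ => trivial⟩⟩

lemma sat_ev_alw_toLTL_iff_eventually (p : PropForm AP) (ρ : Word AP) :
    sat ρ p.toLTL.alw.ev ↔ ∀ᶠ i in atTop, psat (ρ i) p := by
  simp only [sat_ev, sat_alw, Word.suffix_suffix, sat_toLTL_suffix, eventually_atTop]
  refine ⟨fun ⟨N, hN⟩ => ⟨N, fun i hi => ?_⟩, fun ⟨N, hN⟩ => ⟨N, fun i => hN _ (by omega)⟩⟩
  simpa [Nat.sub_add_cancel hi] using hN (i - N)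

lemma sat_alw_ev_toLTL_iff_frequently (p : PropForm AP) (ρ : Word AP) :
    sat ρ p.toLTL.ev.alw ↔ ∃ᶠ i in atTop, psat (ρ i) p := by
  simp only [sat_ev, sat_alw, Word.suffix_suffix, sat_toLTL_suffix, frequently_atTop]
  refine ⟨fun h N => ?_, fun h N => ?_⟩
  · obtain ⟨k, hk⟩ := h N
    exact ⟨k + N, by omega, hk⟩
  · obtain ⟨i, hi, hpi⟩ := h N
    exact ⟨i - N, by rwa [Nat.sub_add_cancel hi]⟩

end Semantics

section Walks

variable {α : Type*}

def WalkVisiting (r : α → α → Prop) (vs : List α) (s t : α) : Prop :=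
  ∃ n > 0, ∃ f : ℕ → α, f 0 = s ∧ f n = t ∧ (∀ i < n, r (f i) (f (i + 1))) ∧
    ∀ v ∈ vs, ∃ i ≤ n, f i = v

def splice (n : ℕ) (f g : ℕ → α) (i : ℕ) : α := if i < n then f i else g (i - n)

variable {r : α → α → Prop} {n k : ℕ} {f g : ℕ → α}

lemma splice_add (n i : ℕ) (f g : ℕ → α) : splice n f g (i + n) = g i := by
  simp [splice]

lemma splice_of_le (hfg : f n = g 0) {i : ℕ} (hi : i ≤ n) : splice n f g i = f i := by
  rcases hi.lt_or_eq with hi | rfl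
  · exact if_pos hi
  · simpa [hfg] using splice_add i 0 f g

lemma splice_isWalk (hf : ∀ i < n, r (f i) (f (i + 1))) (hfg : f n = g 0)
    (hg : ∀ i < k, r (g i) (g (i + 1))) :
    ∀ i < n + k, r (splice n f g i) (splice n f g (i + 1)) := by
  intro i hi
  rcases lt_or_ge i n with hin | hni
  · rw [splice_of_le hfg hin.le, splice_of_le hfg hin]
    exact hf i hin
  · obtain ⟨j, rfl⟩ := Nat.exists_eq_add_of_le' hni
    rw [splice_add, Nat.add_right_comm, splice_add]
    exact hg j (by omega)

lemma eventually_splice_iff {p : α → Prop} :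
    (∀ᶠ i in atTop, p (splice n f g i)) ↔ ∀ᶠ i in atTop, p (g i) := by
  conv_lhs => rw [← map_add_atTop_eq_nat n, eventually_map]
  simp only [splice_add]

lemma frequently_splice_iff {p : α → Prop} :
    (∃ᶠ i in atTop, p (splice n f g i)) ↔ ∃ᶠ i in atTop, p (g i) := by
  conv_lhs => rw [← map_add_atTop_eq_nat n, frequently_map]
  simp only [splice_add]

lemma WalkVisiting.append {vs ws : List α} {s t u : α} (h₁ : WalkVisiting r vs s t)
    (h₂ : WalkVisiting r ws t u) : WalkVisiting r (vs ++ ws) s u := by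
  obtain ⟨n, hn, f, hf0, hfn, hf, hfv⟩ := h₁
  obtain ⟨k, hk, g, hg0, hgk, hg, hgv⟩ := h₂
  have hfg : f n = g 0 := hfn.trans hg0.symm
  refine ⟨n + k, by omega, splice n f g, by rw [splice_of_le hfg n.zero_le, hf0], ?_,
    splice_isWalk hf hfg hg, fun v hv => ?_⟩
  · rw [Nat.add_comm, splice_add, hgk]
  rcases List.mem_append.1 hv with hv | hv
  · obtain ⟨i, hi, rfl⟩ := hfv v hv
    exact ⟨i, by omega, splice_of_le hfg hi⟩
  · obtain ⟨i, hi, rfl⟩ := hgv v hv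
    exact ⟨i + n, by omega, splice_add n i f g⟩

lemma WalkVisiting.cons_self {vs : List α} {s t : α} (h : WalkVisiting r vs s t) :
    WalkVisiting r (s :: vs) s t := by
  obtain ⟨n, hn, f, hf0, hfn, hf, hfv⟩ := h
  refine ⟨n, hn, f, hf0, hfn, hf, fun v hv => ?_⟩
  rcases List.mem_cons.1 hv with rfl | hv
  exacts [⟨0, n.zero_le, hf0⟩, hfv v hv]

lemma walkVisiting_of_forall_mem {B : Set α} (hB : ∀ s ∈ B, ∀ t ∈ B, WalkVisiting r [] s t)
    {vs : List α} (hvs : ∀ v ∈ vs, v ∈ B) {s t : α} (hs : s ∈ B) (ht : t ∈ B) :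
    WalkVisiting r vs s t := by
  induction vs generalizing s with
  | nil => exact hB s hs t ht
  | cons u vs ih =>
    have hu : u ∈ B := hvs u List.mem_cons_self
    exact (hB s hs u hu).append (ih (fun v hv => hvs v (List.mem_cons_of_mem u hv)) hu).cons_self

lemma WalkVisiting.exists_chain {vs : List α} {s : α} (h : WalkVisiting r vs s s) :
    ∃ c : ℕ → α, c 0 = s ∧ (∀ i, r (c i) (c (i + 1))) ∧ ∀ v ∈ vs, ∃ᶠ i in atTop, c i = v := by
  obtain ⟨n, hn, f, hf0, hfn, hf, hfv⟩ := h
  have hmod : ∀ j ≤ n, f (j % n) = f j := by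
    intro j hj
    rcases hj.lt_or_eq with hj | rfl
    · rw [Nat.mod_eq_of_lt hj]
    · rw [Nat.mod_self, hf0, hfn]
  refine ⟨fun i => f (i % n), by simp only [Nat.zero_mod, hf0], fun i => ?_, fun v hv => ?_⟩
  · dsimp only
    rw [← Nat.mod_add_mod, hmod _ (Nat.mod_lt i hn)]
    exact hf _ (Nat.mod_lt i hn)
  · obtain ⟨j, hj, rfl⟩ := hfv v hv
    refine frequently_atTop.2 fun a => ⟨j + n * a, ?_, ?_⟩
    · nlinarith
    · simp only [Nat.add_mul_mod_self_left, hmod j hj]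

lemma walkVisiting_of_chain {π : ℕ → α} {a b : ℕ}
    (h : ∀ i, a ≤ i → i < b → r (π i) (π (i + 1))) (hab : a < b) :
    WalkVisiting r [] (π a) (π b) := by
  refine ⟨b - a, by omega, fun q => π (q + a), by simp, by simp [Nat.sub_add_cancel hab.le],
    fun q hq => ?_, by simp⟩
  simpa only [Nat.add_right_comm] using h (q + a) (by omega) (by omega)

end Walks

section InfOften

variable {α : Type*}

def infOften (π : ℕ → α) : Set α := {s | ∃ᶠ i in atTop, π i = s}

lemma eventually_mem_infOften [Finite α] (π : ℕ → α) : ∀ᶠ i in atTop, π i ∈ infOften π := by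
  have h : ∀ s, ∀ᶠ i in atTop, π i = s → s ∈ infOften π := fun s => by
    by_cases hs : s ∈ infOften π
    · exact Eventually.of_forall fun _ _ => hs
    · exact (not_frequently.1 hs).mono fun _ hi h => absurd h hi
  exact (eventually_all.2 h).mono fun i hi => hi (π i) rfl

lemma forall_mem_infOften_of_eventually {π : ℕ → α} {p : α → Prop}
    (h : ∀ᶠ i in atTop, p (π i)) : ∀ s ∈ infOften π, p s := fun _ hs =>
  let ⟨_, hi, hp⟩ := (Frequently.and_eventually hs h).exists
  hi ▸ hp

lemma exists_mem_infOften_of_frequently [Finite α] {π : ℕ → α} {p : α → Prop}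
    (h : ∃ᶠ i in atTop, p (π i)) : ∃ s ∈ infOften π, p s :=
  let ⟨i, hp, hi⟩ := (h.and_eventually (eventually_mem_infOften π)).exists
  ⟨π i, hi, hp⟩

end InfOften

namespace Kripke

variable {AP : Type} (K : Kripke AP)

def StepIn (B : Set K.S) (a b : K.S) : Prop := K.T a b ∧ a ∈ B ∧ b ∈ B

lemma connIn_iff_walkVisiting {B : Set K.S} {s t : K.S} :
    K.ConnIn B s t ↔ WalkVisiting (K.StepIn B) [] s t := by
  constructor
  · rintro ⟨n, hn, f, hf0, hfn, hT, hB⟩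
    exact ⟨n, hn, f, hf0, hfn, fun i hi => ⟨hT i hi, hB i hi.le, hB (i + 1) hi⟩, by simp⟩
  · rintro ⟨n, hn, f, hf0, hfn, hstep, -⟩
    refine ⟨n, hn, f, hf0, hfn, fun i hi => (hstep i hi).1, fun i hi => ?_⟩
    rcases hi.lt_or_eq with hi | rfl
    · exact (hstep i hi).2.1
    · have := (hstep (i - 1) (by omega)).2.2
      rwa [Nat.sub_add_cancel hn] at this

lemma isSCSet_infOften {π : ℕ → K.S} (hπ : ∀ i, K.T (π i) (π (i + 1))) :
    K.IsSCSet (infOften π) := by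
  have := K.fin
  obtain ⟨M, hM⟩ := eventually_atTop.1 (eventually_mem_infOften π)
  intro s hs t ht
  obtain ⟨a, ha, rfl⟩ := frequently_atTop.1 hs M
  obtain ⟨b, hb, rfl⟩ := frequently_atTop.1 ht (a + 1)
  refine K.connIn_iff_walkVisiting.2 (walkVisiting_of_chain (fun i hi _ => ?_) (by omega))
  exact ⟨hπ i, hM i (by omega), hM (i + 1) (by omega)⟩

variable {K} in
lemma IsSCSet.walkVisiting {B : Set K.S} (hB : K.IsSCSet B) {vs : List K.S}
    (hvs : ∀ v ∈ vs, v ∈ B) {s t : K.S} (hs : s ∈ B) (ht : t ∈ B) :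
    WalkVisiting (K.StepIn B) vs s t :=
  walkVisiting_of_forall_mem (fun s hs t ht => K.connIn_iff_walkVisiting.1 (hB s hs t ht))
    hvs hs ht

end Kripke

/-- There is an infinite path from the initial state satisfying
`FG l ∧ ⋀_j GF l_j` iff there is a reachable nontrivial strongly connected set `B`
all of whose states satisfy `l` and, for each `j`, some state of `B` satisfies `l_j`. -/
theorem exists_path_iff_accepting_SCC {AP : Type} (K : Kripke AP)
    (l : PropForm AP) (m : ℕ) (lj : Fin m → PropForm AP) :
    (∃ π : ℕ → K.S, K.IsPath π ∧
        sat (fun i => K.L (π i)) (l.toLTL.alw.ev) ∧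
        ∀ j : Fin m, sat (fun i => K.L (π i)) ((lj j).toLTL.ev.alw)) ↔
    (∃ B : Set K.S, K.Reachable B ∧ K.IsSCSet B ∧
        (∀ s ∈ B, psat (K.L s) l) ∧
        ∀ j : Fin m, ∃ s ∈ B, psat (K.L s) (lj j)) := by
  have := K.fin
  constructor
  · rintro ⟨π, ⟨hπ0, hπ⟩, hl, hlj⟩
    obtain ⟨M, hM⟩ := eventually_atTop.1 (eventually_mem_infOften π)
    refine ⟨infOften π, ⟨π M, hM M le_rfl, M, π, hπ0, rfl, fun i _ => hπ i⟩,
      K.isSCSet_infOften hπ, ?_, fun j => ?_⟩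
    · exact forall_mem_infOften_of_eventually ((sat_ev_alw_toLTL_iff_eventually l _).1 hl)
    · exact exists_mem_infOften_of_frequently ((sat_alw_ev_toLTL_iff_frequently _ _).1 (hlj j))
  · rintro ⟨B, ⟨s, hsB, n, f, hf0, hfs, hf⟩, hSC, hl, hlj⟩
    choose w hwB hw using hlj
    obtain ⟨c, hc0, hc, hcw⟩ :=
      (hSC.walkVisiting (vs := List.ofFn w) (by simpa using hwB) hsB hsB).exists_chain
    have hfc : f n = c 0 := hfs.trans hc0.symm
    have hπ : K.IsPath (splice n f c) :=
      ⟨by rw [splice_of_le hfc n.zero_le, hf0],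
        fun i => splice_isWalk hf hfc (fun i _ => (hc i).1) i (by omega : i < n + (i + 1))⟩
    have hπB : ∀ᶠ i in atTop, splice n f c i ∈ B :=
      eventually_splice_iff.2 (Eventually.of_forall fun i => (hc i).2.1)
    have hπw : ∀ j, ∃ᶠ i in atTop, splice n f c i = w j :=
      fun j => (frequently_splice_iff (p := (· = w j))).2 (hcw (w j) (List.mem_ofFn.2 ⟨j, rfl⟩))
    refine ⟨splice n f c, hπ, ?_, fun j => ?_⟩
    · exact (sat_ev_alw_toLTL_iff_eventually l _).2 (hπB.mono fun i hi => hl _ hi)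
    · exact (sat_alw_ev_toLTL_iff_frequently _ _).2 ((hπw j).mono fun i hi => hi ▸ hw j)
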